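/- Assume (H3) and let Ξ and f̂ be as in the context. Then f̂ : X → X is continuously Fréchet differentiable. -/

import Mathlib

/-!
The map factors as `ψ ↦ (-1, 1, 0) · Ξ(Λ ψ₂) ψ₁`. Since `k` is essentially bounded,
`ζ ↦ Λ(·, ζ)` is a bounded linear map `L¹ → L∞`; on `L∞` the superposition (Nemytskii) operator
`u ↦ Ξ ∘ u` is `C¹` with derivative `h ↦ (Ξ' ∘ u) h`, because `Ξ'` is uniformly continuous on
bounded sets; and `(u, g) ↦ u g` is a bounded bilinear map `L∞ × L¹ → L¹`. The composite of
`C¹` maps is `C¹`.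
-/

open MeasureTheory Set

noncomputable section

/-- `ℝ³` with the `ℓ¹` norm. -/
abbrev V3 : Type := PiLp 1 fun _ : Fin 3 => ℝ

/-- The state space `X = L¹([0,ω],ℝ³)` with norm `‖ψ‖₁ = ‖ψ₁‖₁+‖ψ₂‖₁+‖ψ₃‖₁`. -/
abbrev XX (ω : ℝ) := Lp (α := ℝ) V3 1 (volume.restrict (Icc (0:ℝ) ω))

/-- `M` is the essential supremum of `|k|` on `[0,ω]²`. -/
def IsEssSupSq (ω : ℝ) (k : ℝ → ℝ → ℝ) (M : ℝ) : Prop :=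
  (∀ᵐ z ∂((volume.restrict (Icc (0:ℝ) ω)).prod (volume.restrict (Icc (0:ℝ) ω))),
      |k z.1 z.2| ≤ M) ∧
    ∀ C : ℝ,
      (∀ᵐ z ∂((volume.restrict (Icc (0:ℝ) ω)).prod (volume.restrict (Icc (0:ℝ) ω))),
        |k z.1 z.2| ≤ C) → M ≤ C

/-- The force of infection `Λ(a,ζ) = ∫₀^ω k(a,σ)ζ(σ)dσ`. -/
def Lam (ω : ℝ) (k : ℝ → ℝ → ℝ) (ζ : ℝ → ℝ) (a : ℝ) : ℝ :=
  ∫ σ in Icc (0:ℝ) ω, k a σ * ζ σ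

/-- Pointwise values of the nonlinearity `f(ψ)(a) = (−Λ(a,ψ₂)ψ₁(a), Λ(a,ψ₂)ψ₁(a), 0)`. -/
def fval (ω : ℝ) (k : ℝ → ℝ → ℝ) (g : ℝ → V3) (a : ℝ) : Fin 3 → ℝ :=
  ![-(Lam ω k (fun σ => g σ 1) a) * g a 0,
     (Lam ω k (fun σ => g σ 1) a) * g a 0, 0]


/-- Pointwise values of the truncated nonlinearity
`f̂(ψ)(a) = (−Ξ(Λ(a,ψ₂))ψ₁(a), Ξ(Λ(a,ψ₂))ψ₁(a), 0)`. -/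
def fhatval (ω : ℝ) (k : ℝ → ℝ → ℝ) (Ξ : ℝ → ℝ) (g : ℝ → V3) (a : ℝ) : Fin 3 → ℝ :=
  ![-(Ξ (Lam ω k (fun σ => g σ 1) a)) * g a 0,
     (Ξ (Lam ω k (fun σ => g σ 1) a)) * g a 0, 0]

open scoped ENNReal

namespace MeasureTheory.Lp

variable {α E : Type*} [MeasurableSpace α] {μ : Measure α} [NormedAddCommGroup E]

lemma ae_norm_le_norm_top (u : Lp E ∞ μ) : ∀ᵐ a ∂μ, ‖u a‖ ≤ ‖u‖ := by
  filter_upwards [enorm_ae_le_eLpNormEssSup u μ] with a ha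
  rw [Lp.norm_def, eLpNorm_exponent_top, ← toReal_enorm]
  exact ENNReal.toReal_mono (by simpa using Lp.eLpNorm_ne_top u) ha

lemma norm_le_of_ae_bound_top {u : Lp E ∞ μ} {C : ℝ} (hC : 0 ≤ C)
    (h : ∀ᵐ a ∂μ, ‖u a‖ ≤ C) : ‖u‖ ≤ C := by
  rw [Lp.norm_def, eLpNorm_exponent_top]
  exact ENNReal.toReal_le_of_le_ofReal hC (eLpNormEssSup_le_of_ae_bound h)

end MeasureTheory.Lp

lemma Continuous.exists_forall_abs_sub_le {g : ℝ → ℝ} (hg : Continuous g) (R : ℝ) {ε : ℝ}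
    (hε : 0 < ε) : ∃ δ > 0, ∀ x y, |x| ≤ R → |y - x| ≤ δ → |g y - g x| ≤ ε := by
  obtain ⟨δ, hδ, hgδ⟩ := Metric.uniformContinuousOn_iff.1
    ((isCompact_Icc (a := -(R + 1)) (b := R + 1)).uniformContinuousOn_of_continuous
      hg.continuousOn) ε hε
  refine ⟨min (δ / 2) 1, by positivity, fun x y hx hxy => ?_⟩
  have h1 := hxy.trans (min_le_right _ _)
  have h2 := hxy.trans (min_le_left _ _)
  rw [abs_le] at hx h1
  refine (hgδ y ⟨by linarith, by linarith⟩ x ⟨by linarith, by linarith⟩ ?_).le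
  rw [Real.dist_eq]; linarith

lemma ContDiff.exists_forall_abs_sub_sub_deriv_mul_le {Ξ : ℝ → ℝ} (hΞ : ContDiff ℝ 1 Ξ) (R : ℝ)
    {ε : ℝ} (hε : 0 < ε) :
    ∃ δ > 0, ∀ x y, |x| ≤ R → |y| ≤ δ → |Ξ (x + y) - Ξ x - deriv Ξ x * y| ≤ ε * |y| := by
  obtain ⟨δ, hδ, hΞ'δ⟩ := (hΞ.continuous_deriv le_rfl).exists_forall_abs_sub_le R hε
  refine ⟨δ, hδ, fun x y hx hy => ?_⟩
  have hdiff : Differentiable ℝ Ξ := hΞ.differentiable one_ne_zero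
  have key := Convex.norm_image_sub_le_of_norm_deriv_le (f := fun t => Ξ t - deriv Ξ x * t)
    (s := uIcc x (x + y)) (C := ε)
    (fun t _ => ((hdiff t).sub ((differentiableAt_id).const_mul _)))
    (fun t ht => ?_) (convex_uIcc _ _) left_mem_uIcc right_mem_uIcc
  · simp only [Real.norm_eq_abs, add_sub_cancel_left] at key
    convert key using 2; ring
  · have hd : deriv (fun t => Ξ t - deriv Ξ x * t) t = deriv Ξ t - deriv Ξ x := by
      have := ((hdiff t).hasDerivAt.sub ((hasDerivAt_id t).const_mul (deriv Ξ x))).deriv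
      rwa [mul_one] at this
    rw [hd, Real.norm_eq_abs]
    refine hΞ'δ x t hx ((abs_sub_left_of_mem_uIcc ht).trans ?_)
    rwa [add_sub_cancel_left]

section Nemytskii

variable {α : Type*} [MeasurableSpace α] {μ : Measure α}

variable (μ) in
def mulLinfty (p : ℝ≥0∞) [Fact (1 ≤ p)] : Lp ℝ ∞ μ →L[ℝ] Lp ℝ p μ →L[ℝ] Lp ℝ p μ :=
  (ContinuousLinearMap.mul ℝ ℝ).holderL μ ∞ p p

lemma coeFn_mulLinfty {p : ℝ≥0∞} [Fact (1 ≤ p)] (u : Lp ℝ ∞ μ) (v : Lp ℝ p μ) :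
    mulLinfty μ p u v =ᵐ[μ] fun a => u a * v a :=
  (ContinuousLinearMap.mul ℝ ℝ).coeFn_holder u v

lemma Continuous.memLp_top_comp {g : ℝ → ℝ} (hg : Continuous g) (u : Lp ℝ ∞ μ) :
    MemLp (fun a => g (u a)) ∞ μ := by
  obtain ⟨C, hC⟩ := (isCompact_Icc (a := -‖u‖) (b := ‖u‖)).exists_bound_of_continuousOn
    hg.continuousOn
  refine memLp_top_of_bound (hg.comp_aestronglyMeasurable (Lp.aestronglyMeasurable u)) C ?_
  filter_upwards [Lp.ae_norm_le_norm_top u] with a ha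
  exact hC _ (abs_le.1 ha)

variable (μ) in
def nemytskii {g : ℝ → ℝ} (hg : Continuous g) (u : Lp ℝ ∞ μ) : Lp ℝ ∞ μ :=
  (hg.memLp_top_comp u).toLp

lemma coeFn_nemytskii {g : ℝ → ℝ} (hg : Continuous g) (u : Lp ℝ ∞ μ) :
    nemytskii μ hg u =ᵐ[μ] fun a => g (u a) :=
  (hg.memLp_top_comp u).coeFn_toLp

lemma continuous_nemytskii {g : ℝ → ℝ} (hg : Continuous g) : Continuous (nemytskii μ hg) := by
  refine Metric.continuous_iff.2 fun u ε hε => ?_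
  obtain ⟨δ, hδ, hgδ⟩ := hg.exists_forall_abs_sub_le ‖u‖ (half_pos hε)
  refine ⟨δ, hδ, fun v hv => ?_⟩
  rw [dist_eq_norm] at hv ⊢
  refine lt_of_le_of_lt (Lp.norm_le_of_ae_bound_top (half_pos hε).le ?_) (half_lt_self hε)
  filter_upwards [Lp.coeFn_sub (nemytskii μ hg v) (nemytskii μ hg u), coeFn_nemytskii hg v,
    coeFn_nemytskii hg u, Lp.coeFn_sub v u, Lp.ae_norm_le_norm_top u,
    Lp.ae_norm_le_norm_top (v - u)] with a h1 h2 h3 h4 hu hvu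
  rw [h1, Pi.sub_apply, h2, h3, Real.norm_eq_abs]
  rw [h4, Pi.sub_apply] at hvu
  exact hgδ _ _ hu (hvu.trans hv.le)

lemma hasFDerivAt_nemytskii {Ξ : ℝ → ℝ} (hΞ : ContDiff ℝ 1 Ξ) (u : Lp ℝ ∞ μ) :
    HasFDerivAt (nemytskii μ hΞ.continuous)
      (mulLinfty μ ∞ (nemytskii μ (hΞ.continuous_deriv le_rfl) u)) u := by
  rw [hasFDerivAt_iff_isLittleO_nhds_zero, Asymptotics.isLittleO_iff]
  intro ε hε
  obtain ⟨δ, hδ, hΞδ⟩ := hΞ.exists_forall_abs_sub_sub_deriv_mul_le ‖u‖ hε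
  filter_upwards [Metric.closedBall_mem_nhds 0 hδ] with h hh
  rw [mem_closedBall_zero_iff] at hh
  refine Lp.norm_le_of_ae_bound_top (by positivity) ?_
  set N := nemytskii μ hΞ.continuous
  set N' := nemytskii μ (hΞ.continuous_deriv le_rfl)
  filter_upwards [Lp.coeFn_sub (N (u + h) - N u) (mulLinfty μ ∞ (N' u) h),
    Lp.coeFn_sub (N (u + h)) (N u), coeFn_nemytskii hΞ.continuous (u + h),
    coeFn_nemytskii hΞ.continuous u, coeFn_mulLinfty (N' u) h,
    coeFn_nemytskii (hΞ.continuous_deriv le_rfl) u, Lp.coeFn_add u h,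
    Lp.ae_norm_le_norm_top u, Lp.ae_norm_le_norm_top h] with a e1 e2 e3 e4 e5 e6 e7 hu hh'
  rw [e1, Pi.sub_apply, e2, Pi.sub_apply, e3, e4, e5, e6, e7, Pi.add_apply]
  rw [Real.norm_eq_abs] at hu hh' ⊢
  exact (hΞδ _ _ hu (hh'.trans hh)).trans (mul_le_mul_of_nonneg_left hh' hε.le)

lemma contDiff_nemytskii {Ξ : ℝ → ℝ} (hΞ : ContDiff ℝ 1 Ξ) :
    ContDiff ℝ 1 (nemytskii μ hΞ.continuous) :=
  contDiff_one_iff_hasFDerivAt.2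
    ⟨fun u => mulLinfty μ ∞ (nemytskii μ (hΞ.continuous_deriv le_rfl) u),
      (mulLinfty μ ∞).continuous.comp (continuous_nemytskii _), hasFDerivAt_nemytskii hΞ⟩

end Nemytskii

section KernelOperator

variable {α β : Type*} [MeasurableSpace β] {ν : Measure β} {k : α → β → ℝ}

lemma integral_kernel_mul_smul (r : ℝ) (ζ : Lp ℝ 1 ν) (a : α) :
    ∫ σ, k a σ * (r • ζ) σ ∂ν = r * ∫ σ, k a σ * ζ σ ∂ν := by
  rw [← integral_const_mul]
  refine integral_congr_ae ?_
  filter_upwards [Lp.coeFn_smul r ζ] with σ hσ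
  rw [hσ, Pi.smul_apply, smul_eq_mul, mul_left_comm]

variable [MeasurableSpace α] {μ : Measure α} [SFinite ν] {M : ℝ}

lemma ae_integrable_kernel_mul (hk : AEStronglyMeasurable (Function.uncurry k) (μ.prod ν))
    (hM : ∀ᵐ z ∂μ.prod ν, |k z.1 z.2| ≤ M) {ζ : β → ℝ} (hζ : Integrable ζ ν) :
    ∀ᵐ a ∂μ, Integrable (fun σ => k a σ * ζ σ) ν := by
  filter_upwards [hk.prodMk_left, Measure.ae_ae_of_ae_prod hM] with a hka hMa
  exact hζ.bdd_mul hka hMa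

lemma ae_abs_integral_kernel_mul_le (hM : ∀ᵐ z ∂μ.prod ν, |k z.1 z.2| ≤ M) (ζ : Lp ℝ 1 ν) :
    ∀ᵐ a ∂μ, |∫ σ, k a σ * ζ σ ∂ν| ≤ M * ‖ζ‖ := by
  filter_upwards [Measure.ae_ae_of_ae_prod hM] with a hMa
  rw [L1.norm_eq_integral_norm, ← integral_const_mul, ← Real.norm_eq_abs]
  refine norm_integral_le_of_norm_le ((L1.integrable_coeFn ζ).norm.const_mul M) ?_
  filter_upwards [hMa] with σ hσ
  rw [norm_mul, Real.norm_eq_abs]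
  exact mul_le_mul_of_nonneg_right hσ (norm_nonneg _)

lemma memLp_top_integral_kernel_mul (hk : AEStronglyMeasurable (Function.uncurry k) (μ.prod ν))
    (hM : ∀ᵐ z ∂μ.prod ν, |k z.1 z.2| ≤ M) (ζ : Lp ℝ 1 ν) :
    MemLp (fun a => ∫ σ, k a σ * ζ σ ∂ν) ∞ μ :=
  memLp_top_of_bound (hk.mul (Lp.aestronglyMeasurable ζ).comp_snd).integral_prod_right'
    (M * ‖ζ‖) (ae_abs_integral_kernel_mul_le hM ζ)

lemma ae_integral_kernel_mul_add (hk : AEStronglyMeasurable (Function.uncurry k) (μ.prod ν))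
    (hM : ∀ᵐ z ∂μ.prod ν, |k z.1 z.2| ≤ M) (ζ η : Lp ℝ 1 ν) :
    ∀ᵐ a ∂μ, ∫ σ, k a σ * (ζ + η) σ ∂ν = ∫ σ, k a σ * ζ σ ∂ν + ∫ σ, k a σ * η σ ∂ν := by
  filter_upwards [ae_integrable_kernel_mul hk hM (L1.integrable_coeFn ζ),
    ae_integrable_kernel_mul hk hM (L1.integrable_coeFn η)] with a hζ hη
  rw [← integral_add hζ hη]
  refine integral_congr_ae ?_
  filter_upwards [Lp.coeFn_add ζ η] with σ hσ
  rw [hσ, Pi.add_apply, mul_add]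

variable (μ) in
def kernelOperator (hk : AEStronglyMeasurable (Function.uncurry k) (μ.prod ν))
    (hM : ∀ᵐ z ∂μ.prod ν, |k z.1 z.2| ≤ M) : Lp ℝ 1 ν →L[ℝ] Lp ℝ ∞ μ :=
  LinearMap.mkContinuous
    { toFun := fun ζ => (memLp_top_integral_kernel_mul hk hM ζ).toLp
      map_add' := fun ζ η => by
        rw [← MemLp.toLp_add]
        exact MemLp.toLp_congr _ _ (ae_integral_kernel_mul_add hk hM ζ η)
      map_smul' := fun r ζ => by
        rw [RingHom.id_apply, ← MemLp.toLp_const_smul]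
        exact MemLp.toLp_congr _ _ (.of_forall (integral_kernel_mul_smul r ζ)) }
    |M| fun ζ => by
      refine Lp.norm_le_of_ae_bound_top (by positivity) ?_
      filter_upwards [(memLp_top_integral_kernel_mul hk hM ζ).coeFn_toLp,
        ae_abs_integral_kernel_mul_le hM ζ] with a e ha
      rw [LinearMap.coe_mk, AddHom.coe_mk, e, Real.norm_eq_abs]
      exact ha.trans (mul_le_mul_of_nonneg_right (le_abs_self M) (norm_nonneg ζ))

lemma coeFn_kernelOperator (hk : AEStronglyMeasurable (Function.uncurry k) (μ.prod ν))
    (hM : ∀ᵐ z ∂μ.prod ν, |k z.1 z.2| ≤ M) (ζ : Lp ℝ 1 ν) :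
    kernelOperator μ hk hM ζ =ᵐ[μ] fun a => ∫ σ, k a σ * ζ σ ∂ν :=
  (memLp_top_integral_kernel_mul hk hM ζ).coeFn_toLp

end KernelOperator

lemma Lam_eq_integral_compLpL (ω : ℝ) (k : ℝ → ℝ → ℝ) (ψ : XX ω) (a : ℝ) :
    Lam ω k (fun σ => ψ σ 1) a = ∫ σ, k a σ *
      (PiLp.proj 1 (fun _ : Fin 3 => ℝ) 1 : V3 →L[ℝ] ℝ).compLpL 1 _ ψ σ
        ∂(volume.restrict (Icc (0:ℝ) ω)) := by
  refine integral_congr_ae ?_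
  filter_upwards [ContinuousLinearMap.coeFn_compLpL (p := 1)
    (PiLp.proj 1 (fun _ : Fin 3 => ℝ) 1 : V3 →L[ℝ] ℝ) ψ] with σ hσ
  exact congrArg (k a σ * ·) hσ.symm

theorem fhat_contDiff_general (ω : ℝ)
    (k : ℝ → ℝ → ℝ) (Mk : ℝ)
    (hkmeas : Measurable (Function.uncurry k)) (hMk : IsEssSupSq ω k Mk)
    (Ξ : ℝ → ℝ) (hΞdiff : Differentiable ℝ Ξ) (hΞderiv : Continuous (deriv Ξ))
    (F : XX ω → XX ω)
    (hF : ∀ ψ : XX ω, ∀ᵐ a ∂(volume.restrict (Icc (0:ℝ) ω)),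
      ∀ i : Fin 3, (F ψ) a i = fhatval ω k Ξ (⇑ψ) a i) :
    ContDiff ℝ 1 F := by
  set μ := volume.restrict (Icc (0:ℝ) ω)
  have hΞ : ContDiff ℝ 1 Ξ := contDiff_one_iff_deriv.2 ⟨hΞdiff, hΞderiv⟩
  let K := kernelOperator μ hkmeas.aestronglyMeasurable hMk.1
  let P : Fin 3 → XX ω →L[ℝ] Lp ℝ 1 μ := fun i => (PiLp.proj 1 (fun _ => ℝ) i).compLpL 1 μ
  let v : V3 := WithLp.toLp 1 ![-1, 1, 0]
  let T : Lp ℝ 1 μ →L[ℝ] XX ω := (ContinuousLinearMap.toSpanSingleton ℝ v).compLpL 1 μ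
  have hF_eq : F = fun ψ => T (mulLinfty μ 1 (nemytskii μ hΞ.continuous (K (P 1 ψ))) (P 0 ψ)) := by
    funext ψ
    refine Lp.ext ?_
    set u := nemytskii μ hΞ.continuous (K (P 1 ψ))
    filter_upwards [hF ψ,
      ContinuousLinearMap.coeFn_compLpL (ContinuousLinearMap.toSpanSingleton ℝ v)
        (mulLinfty μ 1 u (P 0 ψ)),
      coeFn_mulLinfty u (P 0 ψ), coeFn_nemytskii hΞ.continuous (K (P 1 ψ)),
      coeFn_kernelOperator hkmeas.aestronglyMeasurable hMk.1 (P 1 ψ),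
      ContinuousLinearMap.coeFn_compLpL (PiLp.proj 1 (fun _ : Fin 3 => ℝ) 0 : V3 →L[ℝ] ℝ) ψ]
      with a hFa hT hmul hN hK hP
    ext i
    rw [hFa i, hT, hmul, hN, hK, hP, ← Lam_eq_integral_compLpL]
    fin_cases i <;> simp [fhatval, v]
  rw [hF_eq]
  exact T.contDiff.comp (((mulLinfty μ 1).contDiff.comp ((contDiff_nemytskii hΞ).comp
    (K.contDiff.comp (P 1).contDiff))).clm_apply (P 0).contDiff)

/-- under (H3), with `Ξ : ℝ → ℝ` differentiable with continuous derivative,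
`|Ξ| ≤ c` and `0 ≤ Ξ′ ≤ 2`, any map `F : X → X` realizing the truncated nonlinearity
`f̂(ψ)(a) = (−Ξ(Λ(a,ψ₂))ψ₁(a), Ξ(Λ(a,ψ₂))ψ₁(a), 0)` is continuously Fréchet
differentiable. -/
theorem fhat_contDiff (ω : ℝ) (hω : 0 < ω)
    (k : ℝ → ℝ → ℝ) (Mk : ℝ)
    (hkmeas : Measurable (Function.uncurry k)) (hMk : IsEssSupSq ω k Mk)
    (hkpos : ∀ᵐ z ∂((volume.restrict (Icc (0:ℝ) ω)).prod (volume.restrict (Icc (0:ℝ) ω))),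
      0 ≤ k z.1 z.2)
    (c : ℝ) (hc : 0 < c)
    (Ξ : ℝ → ℝ) (hΞdiff : Differentiable ℝ Ξ) (hΞderiv : Continuous (deriv Ξ))
    (hΞbdd : ∀ z : ℝ, |Ξ z| ≤ c)
    (hΞ' : ∀ z : ℝ, 0 ≤ deriv Ξ z ∧ deriv Ξ z ≤ 2)
    (F : XX ω → XX ω)
    (hF : ∀ ψ : XX ω, ∀ᵐ a ∂(volume.restrict (Icc (0:ℝ) ω)),
      ∀ i : Fin 3, (F ψ) a i = fhatval ω k Ξ (⇑ψ) a i) :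
    ContDiff ℝ 1 F :=
  fhat_contDiff_general ω k Mk hkmeas hMk Ξ hΞdiff hΞderiv F hF

end
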